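/- The minimal order of an (m+1)-colored rooted tree with ramification number 𝔯(τ)=k is k − 1/2, attained exactly by the trees in 𝒯_{𝔯,k} = {[•_{l₁}, τ]_{l₂} : τ ∈ 𝒯_{𝔯,k−1}, l₁, l₂ ≥ 1} for k ≥ 2, with 𝒯_{𝔯,1}={•_l : l ≥ 1}. -/

import Mathlib

inductive CTree (m : ℕ) : Type
  | node : Fin (m + 1) → List (CTree m) → CTree m

namespace CTree

variable {m : ℕ}

def rho : CTree m → ℚ
  | .node l ts => (if (l : ℕ) = 0 then 1 else 1/2) + (ts.attach.map (fun t => rho t.1)).sum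
decreasing_by
  all_goals try simp only [CTree.node.sizeOf_spec, List.cons.sizeOf_spec, List.nil.sizeOf_spec]
  all_goals try have := List.sizeOf_lt_of_mem t.2
  all_goals omega

def height : CTree m → ℕ
  | .node _ ts => 1 + (ts.attach.map (fun t => height t.1)).foldr max 0
decreasing_by
  all_goals try simp only [CTree.node.sizeOf_spec, List.cons.sizeOf_spec, List.nil.sizeOf_spec]
  all_goals try have := List.sizeOf_lt_of_mem t.2
  all_goals omega

def ram : CTree m → ℕ
  | .node _ [] => 1
  | .node _ [t] => ram t
  | .node _ ts => 1 + (ts.attach.map (fun t => ram t.1)).foldr max 0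
decreasing_by
  all_goals try simp only [CTree.node.sizeOf_spec, List.cons.sizeOf_spec, List.nil.sizeOf_spec]
  all_goals try have := List.sizeOf_lt_of_mem t.2
  all_goals omega

def dbl : CTree m → ℕ
  | .node _ [] => 1
  | .node _ ts =>
      let ds := ts.attach.map (fun t => dbl t.1)
      let M := ds.foldr max 0
      if 2 ≤ ds.count M then M + 1 else M
decreasing_by
  all_goals try simp only [CTree.node.sizeOf_spec, List.cons.sizeOf_spec, List.nil.sizeOf_spec]
  all_goals try have := List.sizeOf_lt_of_mem t.2
  all_goals omega


end CTree

/-!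
Every node weighs at least `1/2`. In a node with at least two children, the child of largest
ramification number weighs at least `𝔯 - 1/2` by induction, while the root and each other child
add at least `1/2`; a node with a single child only adds weight without raising `𝔯`. Hence
`ρ τ ≥ 𝔯 τ - 1/2`, and equality forces a stochastic root with exactly two children, a stochastic
leaf and a tree that is again extremal. The combs `[•₁, [•₁, … •₁]₁]₁` attain the bound, which
needs a stochastic color, i.e. `m ≥ 1`.
-/

namespace CTree

variable {m : ℕ}

@[elab_as_elim]
theorem induction_on {P : CTree m → Prop} (τ : CTree m)
    (node : ∀ l ts, (∀ t ∈ ts, P t) → P (.node l ts)) : P τ :=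
  match τ with
  | .node l ts => node l ts fun t _ => induction_on t node

def weight (l : Fin (m + 1)) : ℚ := if (l : ℕ) = 0 then 1 else 1 / 2

theorem half_le_weight (l : Fin (m + 1)) : 1 / 2 ≤ weight l := by
  unfold weight; split <;> norm_num

theorem weight_eq_half_iff {l : Fin (m + 1)} : weight l = 1 / 2 ↔ 1 ≤ (l : ℕ) := by
  unfold weight; by_cases h : (l : ℕ) = 0 <;> simp [h]; omega

theorem rho_node (l : Fin (m + 1)) (ts : List (CTree m)) :
    rho (node l ts) = weight l + (ts.map rho).sum := by
  rw [rho]; simp [weight]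

theorem ram_node_nil (l : Fin (m + 1)) : ram (node l ([] : List (CTree m))) = 1 := by
  rw [ram]

theorem ram_node_singleton (l : Fin (m + 1)) (t : CTree m) : ram (node l [t]) = ram t := by
  rw [ram]

theorem ram_node_cons_cons (l : Fin (m + 1)) (a b : CTree m) (ts : List (CTree m)) :
    ram (node l (a :: b :: ts)) = 1 + ((a :: b :: ts).map ram).foldr max 0 := by
  rw [ram] <;> simp

theorem ram_node_pair (l : Fin (m + 1)) (a b : CTree m) :
    ram (node l [a, b]) = 1 + max (ram a) (ram b) := by
  simp [ram_node_cons_cons]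

theorem one_le_ram (τ : CTree m) : 1 ≤ ram τ := by
  induction τ using induction_on with
  | node l ts ih =>
    match ts, ih with
    | [], _ => rw [ram_node_nil]
    | [t], ih => rw [ram_node_singleton]; exact ih t (by simp)
    | a :: b :: ts, _ => rw [ram_node_cons_cons]; omega

theorem exists_mem_ram_node_cons_cons (l : Fin (m + 1)) (a b : CTree m) (ts : List (CTree m)) :
    ∃ t ∈ a :: b :: ts, ram (node l (a :: b :: ts)) = 1 + ram t := by
  obtain ⟨r, hr, hr_eq⟩ : ∃ r ∈ (a :: b :: ts).map ram, ((a :: b :: ts).map ram).foldr max 0 = r :=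
    ⟨_, List.maximum_mem (List.foldr_max_of_ne_nil (by simp)).symm, rfl⟩
  obtain ⟨t, ht, rfl⟩ := List.mem_map.1 hr
  exact ⟨t, ht, by rw [ram_node_cons_cons, hr_eq]⟩

theorem half_le_rho (τ : CTree m) : 1 / 2 ≤ rho τ := by
  induction τ using induction_on with
  | node l ts ih =>
    have : 0 ≤ (ts.map rho).sum :=
      List.sum_nonneg fun _ hx ↦ by
        obtain ⟨t, ht, rfl⟩ := List.mem_map.1 hx
        linarith [ih t ht]
    rw [rho_node]
    linarith [half_le_weight l]

theorem rho_add_le_sum_map_rho {ts : List (CTree m)} {t : CTree m} (ht : t ∈ ts) :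
    rho t + ((ts.length : ℚ) - 1) / 2 ≤ (ts.map rho).sum := by
  classical
  have hperm := List.perm_cons_erase ht
  have hrest := List.card_nsmul_le_sum ((ts.erase t).map rho) (1 / 2)
    (List.forall_mem_map.2 fun s _ ↦ half_le_rho s)
  rw [(hperm.map rho).sum_eq, hperm.length_eq]
  simp only [List.map_cons, List.sum_cons, List.length_cons, List.length_map, nsmul_eq_mul]
    at hrest ⊢
  push_cast
  linarith

theorem ram_sub_half_le_rho (τ : CTree m) : (ram τ : ℚ) - 1 / 2 ≤ rho τ := by
  induction τ using induction_on with
  | node l ts ih =>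
    have hw := half_le_weight l
    match ts, ih with
    | [], _ =>
      simp only [ram_node_nil, rho_node, List.map_nil, List.sum_nil, Nat.cast_one]
      linarith
    | [t], ih =>
      have := ih t (by simp)
      simp only [ram_node_singleton, rho_node, List.map_cons, List.map_nil, List.sum_cons,
        List.sum_nil, add_zero]
      linarith
    | a :: b :: ts, ih =>
      obtain ⟨t, ht, hram⟩ := exists_mem_ram_node_cons_cons l a b ts
      have hsum := rho_add_le_sum_map_rho ht
      have hlen : (2 : ℚ) ≤ (a :: b :: ts).length := by
        simp only [List.length_cons]
        push_cast
        linarith [ts.length.cast_nonneg (α := ℚ)]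
      rw [hram, rho_node]
      push_cast
      linarith [ih t ht]

theorem eq_leaf_of_rho_eq_half {τ : CTree m} (h : rho τ = 1 / 2) :
    ∃ l : Fin (m + 1), 1 ≤ (l : ℕ) ∧ τ = node l [] := by
  obtain ⟨l, ts⟩ := τ
  rw [rho_node] at h
  match ts, h with
  | [], h =>
    refine ⟨l, ?_, rfl⟩
    by_contra hl
    simp [weight, show (l : ℕ) = 0 by omega] at h
  | t :: ts, h =>
    have := rho_add_le_sum_map_rho (List.mem_cons_self (a := t) (l := ts))
    have := half_le_rho t
    have := half_le_weight l
    simp only [List.length_cons, Nat.cast_add, Nat.cast_one] at *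
    linarith [ts.length.cast_nonneg (α := ℚ)]

/-- By `ram_sub_half_le_rho`, these are the trees of least order among those with the same
ramification number: the paper's `𝒯_{𝔯,k}` for `k = ram τ`. -/
def IsRamOptimal (τ : CTree m) : Prop := rho τ = ram τ - 1 / 2

theorem isRamOptimal_leaf {l : Fin (m + 1)} (hl : 1 ≤ (l : ℕ)) :
    IsRamOptimal (node l ([] : List (CTree m))) := by
  rw [IsRamOptimal, rho_node, ram_node_nil, weight_eq_half_iff.2 hl]
  norm_num

theorem IsRamOptimal.of_node_pair {l : Fin (m + 1)} {a b : CTree m}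
    (h : IsRamOptimal (node l [a, b])) :
    1 ≤ (l : ℕ) ∧ (IsRamOptimal a ∧ rho b = 1 / 2 ∨ rho a = 1 / 2 ∧ IsRamOptimal b) := by
  unfold IsRamOptimal at *
  simp only [rho_node, ram_node_pair, List.map_cons, List.map_nil, List.sum_cons, List.sum_nil,
    add_zero] at h
  have := half_le_weight l
  have := ram_sub_half_le_rho a
  have := ram_sub_half_le_rho b
  have := half_le_rho a
  have := half_le_rho b
  rcases le_total (ram b) (ram a) with hba | hab
  · rw [max_eq_left hba] at h
    push_cast at h
    exact ⟨weight_eq_half_iff.1 (by linarith), .inl ⟨by linarith, by linarith⟩⟩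
  · rw [max_eq_right hab] at h
    push_cast at h
    exact ⟨weight_eq_half_iff.1 (by linarith), .inr ⟨by linarith, by linarith⟩⟩

theorem IsRamOptimal.eq_leaf_or_eq_node {τ : CTree m} (h : IsRamOptimal τ) :
    (∃ l : Fin (m + 1), 1 ≤ (l : ℕ) ∧ τ = node l []) ∨
      ∃ (l₁ l₂ : Fin (m + 1)) (σ : CTree m) (ts : List (CTree m)), 1 ≤ (l₁ : ℕ) ∧
        1 ≤ (l₂ : ℕ) ∧ IsRamOptimal σ ∧ ts.Perm [node l₁ [], σ] ∧ τ = node l₂ ts := by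
  obtain ⟨l, ts⟩ := τ
  have hw := half_le_weight l
  match ts, h with
  | [], h =>
    refine .inl (eq_leaf_of_rho_eq_half ?_)
    unfold IsRamOptimal at h
    rw [h, ram_node_nil]
    norm_num
  | [t], h =>
    have := ram_sub_half_le_rho t
    simp only [IsRamOptimal, rho_node, ram_node_singleton, List.map_cons, List.map_nil,
      List.sum_cons, List.sum_nil, add_zero] at h
    linarith
  | [a, b], h =>
    obtain ⟨hl, ⟨ha, hb⟩ | ⟨ha, hb⟩⟩ := h.of_node_pair
    · obtain ⟨l₁, hl₁, rfl⟩ := eq_leaf_of_rho_eq_half hb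
      exact .inr ⟨l₁, l, a, _, hl₁, hl, ha, .swap _ _ _, rfl⟩
    · obtain ⟨l₁, hl₁, rfl⟩ := eq_leaf_of_rho_eq_half ha
      exact .inr ⟨l₁, l, b, _, hl₁, hl, hb, .refl _, rfl⟩
  | a :: b :: c :: ts, h =>
    obtain ⟨t, ht, hram⟩ := exists_mem_ram_node_cons_cons l a b (c :: ts)
    have := rho_add_le_sum_map_rho ht
    have := ram_sub_half_le_rho t
    rw [IsRamOptimal, rho_node, hram] at h
    simp only [List.length_cons, Nat.cast_add, Nat.cast_one] at *
    linarith [ts.length.cast_nonneg (α := ℚ)]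

theorem ram_node_of_perm {l₁ l₂ : Fin (m + 1)} {σ : CTree m} {ts : List (CTree m)}
    (h : ts.Perm [node l₁ [], σ]) : ram (node l₂ ts) = ram σ + 1 := by
  have := one_le_ram σ
  rcases List.perm_pair.1 h with rfl | rfl <;> simp only [ram_node_pair, ram_node_nil] <;> omega

theorem rho_node_of_perm {l₁ l₂ : Fin (m + 1)} {σ : CTree m} {ts : List (CTree m)}
    (hl₁ : 1 ≤ (l₁ : ℕ)) (hl₂ : 1 ≤ (l₂ : ℕ)) (h : ts.Perm [node l₁ [], σ]) :
    rho (node l₂ ts) = rho σ + 1 := by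
  rw [rho_node, (h.map rho).sum_eq, weight_eq_half_iff.2 hl₂]
  simp only [List.map_cons, List.map_nil, List.sum_cons, List.sum_nil, rho_node,
    weight_eq_half_iff.2 hl₁]
  ring

theorem isRamOptimal_node_of_perm {l₁ l₂ : Fin (m + 1)} {σ : CTree m} {ts : List (CTree m)}
    (hl₁ : 1 ≤ (l₁ : ℕ)) (hl₂ : 1 ≤ (l₂ : ℕ)) (hσ : IsRamOptimal σ)
    (h : ts.Perm [node l₁ [], σ]) : IsRamOptimal (node l₂ ts) := by
  unfold IsRamOptimal at *
  rw [rho_node_of_perm hl₁ hl₂ h, ram_node_of_perm h, hσ]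
  push_cast
  ring

theorem exists_ram_eq_isRamOptimal (hm : 1 ≤ m) {k : ℕ} (hk : 1 ≤ k) :
    ∃ τ : CTree m, ram τ = k ∧ IsRamOptimal τ := by
  let l : Fin (m + 1) := ⟨1, by omega⟩
  induction k, hk using Nat.le_induction with
  | base => exact ⟨node l [], ram_node_nil l, isRamOptimal_leaf le_rfl⟩
  | succ k _ ih =>
    obtain ⟨τ, hram, hτ⟩ := ih
    have hperm : [node l [], τ].Perm [node l [], τ] := .refl _
    exact ⟨node l [node l [], τ], by rw [ram_node_of_perm hperm, hram],
      isRamOptimal_node_of_perm le_rfl le_rfl hτ hperm⟩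

theorem ram_eq_and_forall_rho_le_iff (hm : 1 ≤ m) {k : ℕ} (hk : 1 ≤ k) (τ : CTree m) :
    (ram τ = k ∧ ∀ σ : CTree m, ram σ = k → rho τ ≤ rho σ) ↔ ram τ = k ∧ IsRamOptimal τ := by
  refine and_congr_right fun hτ ↦ ⟨fun hmin ↦ ?_, fun hopt σ hσ ↦ ?_⟩
  · obtain ⟨σ, hσ, hσopt⟩ := exists_ram_eq_isRamOptimal hm hk
    have := hmin σ hσ
    have := ram_sub_half_le_rho τ
    unfold IsRamOptimal at *
    rw [hσ, ← hτ] at hσopt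
    linarith
  · have := ram_sub_half_le_rho σ
    unfold IsRamOptimal at hopt
    rw [hopt, hτ, ← hσ]
    exact this

theorem ram_eq_one_and_isRamOptimal_iff (τ : CTree m) :
    ram τ = 1 ∧ IsRamOptimal τ ↔ ∃ l : Fin (m + 1), 1 ≤ (l : ℕ) ∧ τ = node l [] := by
  constructor
  · rintro ⟨hram, hτ⟩
    refine eq_leaf_of_rho_eq_half ?_
    unfold IsRamOptimal at hτ
    rw [hτ, hram]
    norm_num
  · rintro ⟨l, hl, rfl⟩
    exact ⟨ram_node_nil l, isRamOptimal_leaf hl⟩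

theorem ram_eq_and_isRamOptimal_iff {k : ℕ} (hk : 2 ≤ k) (τ : CTree m) :
    ram τ = k ∧ IsRamOptimal τ ↔
      ∃ (l₁ l₂ : Fin (m + 1)) (σ : CTree m) (ts : List (CTree m)), 1 ≤ (l₁ : ℕ) ∧
        1 ≤ (l₂ : ℕ) ∧ (ram σ = k - 1 ∧ IsRamOptimal σ) ∧ ts.Perm [node l₁ [], σ] ∧
        τ = node l₂ ts := by
  constructor
  · rintro ⟨hram, hτ⟩
    rcases hτ.eq_leaf_or_eq_node with ⟨l, -, rfl⟩ | ⟨l₁, l₂, σ, ts, hl₁, hl₂, hσ, hperm, rfl⟩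
    · rw [ram_node_nil] at hram
      omega
    · rw [ram_node_of_perm hperm] at hram
      exact ⟨l₁, l₂, σ, ts, hl₁, hl₂, ⟨by omega, hσ⟩, hperm, rfl⟩
  · rintro ⟨l₁, l₂, σ, ts, hl₁, hl₂, ⟨hram, hσ⟩, hperm, rfl⟩
    exact ⟨by rw [ram_node_of_perm hperm]; omega, isRamOptimal_node_of_perm hl₁ hl₂ hσ hperm⟩

theorem isLeast_rho_of_ram_eq (hm : 1 ≤ m) {k : ℕ} (hk : 1 ≤ k) :
    IsLeast {r : ℚ | ∃ τ : CTree m, ram τ = k ∧ rho τ = r} ((k : ℚ) - 1 / 2) := by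
  refine ⟨?_, ?_⟩
  · obtain ⟨τ, hram, hτ⟩ := exists_ram_eq_isRamOptimal hm hk
    exact ⟨τ, hram, by rw [hτ, hram]⟩
  · rintro r ⟨τ, hram, rfl⟩
    simpa [hram] using ram_sub_half_le_rho τ

end CTree

open CTree in
theorem stmt7 (m k : ℕ) (hm : 1 ≤ m) (hk : 2 ≤ k) :
    ({τ : CTree m | ram τ = 1 ∧ ∀ σ : CTree m, ram σ = 1 → rho τ ≤ rho σ}
       = {τ : CTree m | ∃ l : Fin (m+1), 1 ≤ (l : ℕ) ∧ τ = .node l []})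
    ∧ ({τ : CTree m | ram τ = k ∧ ∀ σ : CTree m, ram σ = k → rho τ ≤ rho σ}
       = {τ : CTree m | ∃ (l₁ l₂ : Fin (m+1)) (σ : CTree m) (ts : List (CTree m)),
            1 ≤ (l₁ : ℕ) ∧ 1 ≤ (l₂ : ℕ) ∧
            (ram σ = k - 1 ∧ ∀ σ' : CTree m, ram σ' = k - 1 → rho σ ≤ rho σ') ∧
            ts.Perm [CTree.node l₁ [], σ] ∧ τ = .node l₂ ts})
    ∧ IsLeast {r : ℚ | ∃ τ : CTree m, ram τ = k ∧ rho τ = r} ((k : ℚ) - 1/2) := by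
  refine ⟨?_, ?_, isLeast_rho_of_ram_eq hm (by omega)⟩
  · ext τ
    simp only [Set.mem_ofPred_eq, ram_eq_and_forall_rho_le_iff hm le_rfl]
    exact ram_eq_one_and_isRamOptimal_iff τ
  · ext τ
    simp only [Set.mem_ofPred_eq, ram_eq_and_forall_rho_le_iff hm (by omega : 1 ≤ k),
      ram_eq_and_forall_rho_le_iff hm (by omega : 1 ≤ k - 1)]
    exact ram_eq_and_isRamOptimal_iff hk τ
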